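/- Every palindromic factor of p belongs to the set {0, 1, 2, 121, 101, 010, 01210, 21012, 1012101}; in particular, p contains no palindromic factor of length greater than 7. -/

import Mathlib

/-- The morphism h : 0 → 01, 1 → 21, 2 → 0. -/
def h : ℕ → List ℕ
  | 0 => [0, 1]
  | 1 => [2, 1]
  | _ => [0]

/-- Apply the morphism h to a finite word. -/
def hword (w : List ℕ) : List ℕ := (w.map h).flatten

/-- `p : ℕ → ℕ` is the infinite fixed point of h starting with 0:
it takes values in {0,1,2}, starts with 0, and for every n the word
h(p 0) h(p 1) ⋯ h(p (n-1)) is a prefix of p. -/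
def IsFixedPoint (p : ℕ → ℕ) : Prop :=
  (∀ n, p n < 3) ∧ p 0 = 0 ∧
  ∀ n k, k < (hword ((List.range n).map p)).length →
    (hword ((List.range n).map p)).getD k 0 = p k

/-- `w` is a (contiguous) factor of the infinite word `p`. -/
def IsFactor (w : List ℕ) (p : ℕ → ℕ) : Prop :=
  ∃ i : ℕ, w = (List.range w.length).map fun j => p (i + j)

/-!
Since the images of letters under `h` have length 1 or 2, every factor of length 9 of `p` starting
at a position `i ≥ 1` lies, at offset 0 or 1, inside the image under `h` of the factor of length 9
starting at an earlier position. Hence the set of factors of length 9 is contained in any set of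
words of length 9 that contains the prefix of `p` and is closed under this operation; such a set
with 19 elements is checked by computation. Its prefixes contain all palindromic factors of length
at most 9, and none of these has length 8 or 9, so removing the outer letters of a palindromic
factor of length ≥ 10 repeatedly would give one of length 8 or 9.
-/

@[simp] lemma hword_nil : hword [] = [] := rfl

@[simp] lemma hword_cons (a : ℕ) (w : List ℕ) : hword (a :: w) = h a ++ hword w := rfl

@[simp] lemma hword_append (u v : List ℕ) : hword (u ++ v) = hword u ++ hword v := by
  simp [hword]

lemma length_h_pos (a : ℕ) : 0 < (h a).length := by
  unfold h; split <;> simp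

lemma length_h_le_two (a : ℕ) : (h a).length ≤ 2 := by
  unfold h; split <;> simp

lemma length_le_length_hword (w : List ℕ) : w.length ≤ (hword w).length := by
  induction w with
  | nil => simp
  | cons a w ih =>
    have := length_h_pos a
    simp only [hword_cons, List.length_append, List.length_cons]; omega

lemma length_hword_le (w : List ℕ) : (hword w).length ≤ 2 * w.length := by
  induction w with
  | nil => simp
  | cons a w ih =>
    have := length_h_le_two a
    simp only [hword_cons, List.length_append, List.length_cons]; omega

section Factors

variable (p : ℕ → ℕ)

def factorAt (i n : ℕ) : List ℕ := (List.range n).map fun j => p (i + j)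

lemma isFactor_iff {w : List ℕ} : IsFactor w p ↔ ∃ i, w = factorAt p i w.length := Iff.rfl

@[simp] lemma length_factorAt (i n : ℕ) : (factorAt p i n).length = n := by
  simp [factorAt]

lemma factorAt_zero_eq (n : ℕ) : factorAt p 0 n = (List.range n).map p := by
  simp [factorAt]

lemma factorAt_add (i m n : ℕ) :
    factorAt p i (m + n) = factorAt p i m ++ factorAt p (i + m) n := by
  simp [factorAt, List.range_add, Nat.add_assoc]

lemma take_factorAt {m n : ℕ} (i : ℕ) (hmn : m ≤ n) :
    (factorAt p i n).take m = factorAt p i m := by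
  simp [factorAt, ← List.map_take, hmn]

lemma factorAt_eq_take_drop {i n N : ℕ} (hN : i + n ≤ N) :
    factorAt p i n = ((factorAt p 0 N).drop i).take n := by
  obtain ⟨k, rfl⟩ := Nat.exists_eq_add_of_le hN
  rw [Nat.add_assoc, factorAt_add, List.drop_left' (length_factorAt p 0 i), zero_add,
    factorAt_add, List.take_left' (length_factorAt p i n)]

variable {p} in
lemma IsFactor.of_infix {l w : List ℕ} (hlw : l <:+: w) (hw : IsFactor w p) : IsFactor l p := by
  obtain ⟨s, t, rfl⟩ := hlw
  obtain ⟨i, hi⟩ := (isFactor_iff p).1 hw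
  refine ⟨i + s.length, ?_⟩
  simp only [List.length_append, factorAt_add] at hi
  obtain ⟨hsl, -⟩ := List.append_inj hi (by simp)
  exact (List.append_inj hsl (by simp)).2

end Factors

def imageLength (p : ℕ → ℕ) (n : ℕ) : ℕ := (hword (factorAt p 0 n)).length

lemma imageLength_add (p : ℕ → ℕ) (j m : ℕ) :
    imageLength p (j + m) = imageLength p j + (hword (factorAt p j m)).length := by
  simp [imageLength, factorAt_add]

def factors9 : List (List ℕ) :=
  [[0, 1, 0, 2, 1, 0, 1, 2, 1],
   [0, 1, 2, 1, 0, 1, 0, 2, 1],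
   [0, 1, 2, 1, 0, 2, 1, 0, 1],
   [0, 2, 1, 0, 1, 0, 2, 1, 0],
   [0, 2, 1, 0, 1, 2, 1, 0, 1],
   [0, 2, 1, 0, 1, 2, 1, 0, 2],
   [1, 0, 1, 0, 2, 1, 0, 1, 2],
   [1, 0, 1, 2, 1, 0, 1, 0, 2],
   [1, 0, 1, 2, 1, 0, 2, 1, 0],
   [1, 0, 2, 1, 0, 1, 0, 2, 1],
   [1, 0, 2, 1, 0, 1, 2, 1, 0],
   [1, 2, 1, 0, 1, 0, 2, 1, 0],
   [1, 2, 1, 0, 2, 1, 0, 1, 0],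
   [1, 2, 1, 0, 2, 1, 0, 1, 2],
   [2, 1, 0, 1, 0, 2, 1, 0, 1],
   [2, 1, 0, 1, 2, 1, 0, 1, 0],
   [2, 1, 0, 1, 2, 1, 0, 2, 1],
   [2, 1, 0, 2, 1, 0, 1, 0, 2],
   [2, 1, 0, 2, 1, 0, 1, 2, 1]]

def palindromicFactors : List (List ℕ) :=
  [[0], [1], [2], [1,2,1], [1,0,1], [0,1,0], [0,1,2,1,0], [2,1,0,1,2], [1,0,1,2,1,0,1]]

lemma take_drop_hword_mem_factors9 :
    ∀ u ∈ factors9, ∀ d < 2, ((hword u).drop d).take 9 ∈ factors9 := by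
  decide

lemma take_mem_palindromicFactors :
    ∀ u ∈ factors9, ∀ m ≤ 9, m ≠ 0 → (u.take m).Palindrome →
      u.take m ∈ palindromicFactors := by
  decide

lemma length_le_seven_of_mem_palindromicFactors : ∀ u ∈ palindromicFactors, u.length ≤ 7 := by
  decide

namespace IsFixedPoint

variable {p : ℕ → ℕ} (hp : IsFixedPoint p)
include hp

theorem factorAt_zero_length_hword {n : ℕ} {u : List ℕ} (hu : factorAt p 0 n = u) :
    factorAt p 0 (hword u).length = hword u := by
  subst hu
  apply List.ext_getElem (by simp)
  intro k _ hk
  have hpk := hp.2.2 n k (by rwa [factorAt_zero_eq] at hk)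
  rw [← factorAt_zero_eq, List.getD_eq_getElem _ _ hk] at hpk
  simpa [factorAt] using hpk.symm

theorem factorAt_zero_hword_iterate (k : ℕ) :
    factorAt p 0 (hword^[k] [0]).length = hword^[k] [0] := by
  induction k with
  | zero => simp [factorAt, hp.2.1]
  | succ k ih => rw [Function.iterate_succ_apply']; exact hp.factorAt_zero_length_hword ih

theorem lt_imageLength {n : ℕ} (hn : n ≠ 0) : n < imageLength p n := by
  obtain ⟨k, rfl⟩ := Nat.exists_eq_add_one_of_ne_zero hn
  have h1 : imageLength p 1 = 2 := by simp [imageLength, factorAt, hp.2.1, h]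
  have := length_le_length_hword (factorAt p 1 k)
  rw [length_factorAt] at this
  rw [add_comm, imageLength_add, h1]
  omega

theorem exists_imageLength_le_lt {i : ℕ} (hi : i ≠ 0) :
    ∃ j < i, imageLength p j ≤ i ∧ i < imageLength p (j + 1) := by
  have hex : ∃ j, i < imageLength p (j + 1) :=
    ⟨i, (hp.lt_imageLength i.succ_ne_zero).trans' (by omega)⟩
  refine ⟨Nat.find hex, ?_, ?_, Nat.find_spec hex⟩
  · have := Nat.find_le (h := hex) (n := i - 1)
      (by rw [Nat.sub_add_cancel (by omega)]; exact hp.lt_imageLength hi)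
    omega
  · rcases h : Nat.find hex with _ | j
    · simp [imageLength, factorAt]
    · exact not_lt.1 (Nat.find_min hex (h ▸ j.lt_succ_self))

theorem factorAt_eq_take_drop_hword {i j m n : ℕ} (hji : imageLength p j ≤ i)
    (hin : i + n ≤ imageLength p (j + m)) :
    factorAt p i n = ((hword (factorAt p j m)).drop (i - imageLength p j)).take n := by
  have hpre : factorAt p 0 (imageLength p (j + m)) =
      hword (factorAt p 0 j) ++ hword (factorAt p j m) := by
    rw [imageLength, hp.factorAt_zero_length_hword rfl, factorAt_add, hword_append, zero_add]
  rw [factorAt_eq_take_drop p hin, hpre, List.drop_append, List.drop_eq_nil_of_le hji,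
    List.nil_append, imageLength]

theorem factorAt_mem_factors9 (i : ℕ) : factorAt p i 9 ∈ factors9 := by
  induction i using Nat.strong_induction_on with
  | _ i ih =>
  rcases eq_or_ne i 0 with rfl | hi
  · rw [factorAt_eq_take_drop p (N := (hword^[4] [0]).length) (by decide),
      hp.factorAt_zero_hword_iterate 4]
    decide
  obtain ⟨j, hji, hσj, hσj1⟩ := hp.exists_imageLength_le_lt hi
  have hlong : i + 9 ≤ imageLength p (j + 9) := by
    have := length_le_length_hword (factorAt p (j + 1) 8)
    rw [show j + 9 = j + 1 + 8 by omega, imageLength_add]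
    rw [length_factorAt] at this; omega
  have hshort : i - imageLength p j < 2 := by
    have := length_hword_le (factorAt p j 1)
    rw [imageLength_add] at hσj1
    rw [length_factorAt] at this; omega
  rw [hp.factorAt_eq_take_drop_hword hσj hlong]
  exact take_drop_hword_mem_factors9 _ (ih j hji) _ hshort

theorem mem_palindromicFactors_of_length_le_nine {w : List ℕ} (hw : IsFactor w p)
    (hpal : w.Palindrome) (hne : w ≠ []) (hlen : w.length ≤ 9) : w ∈ palindromicFactors := by
  obtain ⟨i, hi⟩ := (isFactor_iff p).1 hw
  rw [← take_factorAt p i hlen] at hi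
  rw [hi] at hpal ⊢
  exact take_mem_palindromicFactors _ (hp.factorAt_mem_factors9 i) _ hlen (by simpa using hne) hpal

theorem length_le_seven_of_palindrome {w : List ℕ} (hpal : w.Palindrome) (hw : IsFactor w p) :
    w.length ≤ 7 := by
  induction hpal with
  | nil => simp
  | singleton => simp
  | cons_concat x hl ih =>
    have hl7 := ih (hw.of_infix ⟨[x], [x], rfl⟩)
    refine length_le_seven_of_mem_palindromicFactors _ ?_
    exact hp.mem_palindromicFactors_of_length_le_nine hw (.cons_concat x hl) (by simp)
      (by simp only [List.length_cons, List.length_append, List.length_nil]; omega)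

end IsFixedPoint

theorem stmt15 (p : ℕ → ℕ) (hp : IsFixedPoint p) :
    ∀ w : List ℕ, w ≠ [] → IsFactor w p → w.reverse = w →
      w ∈ [[0], [1], [2], [1,2,1], [1,0,1], [0,1,0],
        [0,1,2,1,0], [2,1,0,1,2], [1,0,1,2,1,0,1]] := by
  intro w hne hw hrev
  have hpal : w.Palindrome := .of_reverse_eq hrev
  exact hp.mem_palindromicFactors_of_length_le_nine hw hpal hne
    ((hp.length_le_seven_of_palindrome hpal hw).trans (by norm_num))
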